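/- arXiv:2007.06368 — 2 statements merged into one kernel-verified Lean document; each statement's English description precedes it below -/
import Mathlib

section
/- Let A_0 be a real symmetric positive definite n×n matrix, let x_0, x_1, …, x_{T−1} ∈ ℝⁿ, and define recursively A_{t+1} = A_t + x_t x_tᵀ. Then Σ_{t=0}^{T−1} min(x_tᵀ A_t⁻¹ x_t, 1) ≤ 2·(log det(A_T) − log det(A_0)). -/
open Matrix Finset

/-
By the matrix determinant lemma, det A_{t+1} = det A_t · (1 + x_tᵀ A_t⁻¹ x_t), so
log det A_T − log det A_0 telescopes into ∑ log (1 + x_tᵀ A_t⁻¹ x_t). Each term is at least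
half of min (x_tᵀ A_t⁻¹ x_t) 1, since log (1 + a) ≥ a / (1 + a) ≥ min a 1 / 2 for a ≥ 0.
-/

theorem Matrix.det_add_vecMulVec {m α : Type*} [Fintype m] [DecidableEq m] [CommRing α]
    {A : Matrix m m α} (hA : IsUnit A.det) (u v : m → α) :
    (A + vecMulVec u v).det = A.det * (1 + v ⬝ᵥ A⁻¹ *ᵥ u) := by
  rw [vecMulVec_eq Unit, det_add_replicateCol_mul_replicateRow hA, Matrix.mul_assoc,
    ← replicateCol_mulVec]
  simp [det_unique]

theorem Real.min_le_two_mul_log_one_add {a : ℝ} (ha : 0 ≤ a) :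
    min a 1 ≤ 2 * Real.log (1 + a) := by
  have hpos : 0 < 1 + a := by linarith
  have hmin : min a 1 * (1 + a) ≤ 2 * a := by
    rcases le_total a 1 with h | h
    · rw [min_eq_left h]; nlinarith
    · rw [min_eq_right h]; linarith
  calc min a 1 ≤ 2 * a / (1 + a) := (le_div_iff₀ hpos).mpr hmin
    _ = 2 * (1 - (1 + a)⁻¹) := by field_simp; ring
    _ ≤ 2 * Real.log (1 + a) := by gcongr; exact Real.one_sub_inv_le_log_of_pos hpos

namespace Matrix.PosDef

variable {m : Type*} [Fintype m] {A : Matrix m m ℝ}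

theorem add_vecMulVec_self (hA : A.PosDef) (x : m → ℝ) : (A + vecMulVec x x).PosDef := by
  simpa using hA.add_posSemidef (posSemidef_vecMulVec_self_star x)

variable [DecidableEq m]

theorem dotProduct_inv_mulVec_nonneg (hA : A.PosDef) (x : m → ℝ) : 0 ≤ x ⬝ᵥ A⁻¹ *ᵥ x := by
  simpa using hA.inv.posSemidef.dotProduct_mulVec_nonneg x

theorem log_det_add_vecMulVec_self (hA : A.PosDef) (x : m → ℝ) :
    Real.log (A + vecMulVec x x).det = Real.log A.det + Real.log (1 + x ⬝ᵥ A⁻¹ *ᵥ x) := by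
  have hquad := hA.dotProduct_inv_mulVec_nonneg x
  rw [det_add_vecMulVec hA.det_pos.ne'.isUnit, Real.log_mul hA.det_pos.ne' (by positivity)]

end Matrix.PosDef

/-- Elliptical potential bound along the recursion `A_{t+1} = A_t + x_t x_tᵀ`:
`∑_{t<T} min (x_tᵀ A_t⁻¹ x_t) 1 ≤ 2 (log det A_T − log det A_0)`. -/
theorem stmt_9 {n : ℕ} (T : ℕ) (x : ℕ → (Fin n → ℝ))
    (A : ℕ → Matrix (Fin n) (Fin n) ℝ) (hA0 : (A 0).PosDef)
    (hrec : ∀ t, A (t + 1) = A t + vecMulVec (x t) (x t)) :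
    ∑ t ∈ Finset.range T, min (x t ⬝ᵥ ((A t)⁻¹ *ᵥ x t)) 1 ≤
      2 * (Real.log (A T).det - Real.log (A 0).det) := by
  have hPD : ∀ t, (A t).PosDef := by
    intro t
    induction t with
    | zero => exact hA0
    | succ t ih => rw [hrec t]; exact ih.add_vecMulVec_self (x t)
  calc ∑ t ∈ range T, min (x t ⬝ᵥ (A t)⁻¹ *ᵥ x t) 1
      ≤ ∑ t ∈ range T, 2 * Real.log (1 + x t ⬝ᵥ (A t)⁻¹ *ᵥ x t) :=
        sum_le_sum fun t _ ↦
          Real.min_le_two_mul_log_one_add ((hPD t).dotProduct_inv_mulVec_nonneg (x t))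
    _ = 2 * ∑ t ∈ range T, (Real.log (A (t + 1)).det - Real.log (A t).det) := by
        rw [mul_sum]
        refine sum_congr rfl fun t _ ↦ ?_
        rw [hrec t, (hPD t).log_det_add_vecMulVec_self, add_sub_cancel_left]
    _ = 2 * (Real.log (A T).det - Real.log (A 0).det) := by
        rw [sum_range_sub fun t ↦ Real.log (A t).det]
end

section
/- Let S and A be real symmetric positive definite n×n matrices such that A − S is positive semidefinite, and let x ∈ ℝⁿ. Then det(A + x xᵀ)/det(S + x xᵀ) ≤ det(A)/det(S). -/
/-!
By the matrix determinant lemma, `det (M + x xᵀ) = det M · (1 + xᵀ M⁻¹ x)` for invertible `M`, so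
the claim reduces to `xᵀ A⁻¹ x ≤ xᵀ S⁻¹ x`, i.e. to the antitonicity of inversion in the Loewner
order. That follows from the variational formula `xᵀ S⁻¹ x = max_y (2 yᵀx - yᵀ S y)` evaluated at
`y = A⁻¹ x`, using `yᵀ S y ≤ yᵀ A y`.
-/

open Matrix

namespace Matrix

variable {n : Type*} [Fintype n]

theorem IsSymm.dotProduct_mulVec_comm {R : Type*} [CommSemiring R] {S : Matrix n n R}
    (hS : S.IsSymm) (v w : n → R) : v ⬝ᵥ S *ᵥ w = w ⬝ᵥ S *ᵥ v := by
  rw [dotProduct_mulVec, ← mulVec_transpose, hS.eq, dotProduct_comm]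

variable [DecidableEq n]

theorem det_add_vecMulVec_s12 {R : Type*} [CommRing R] {M : Matrix n n R} (hM : IsUnit M.det)
    (u v : n → R) : (M + vecMulVec u v).det = M.det * (1 + v ⬝ᵥ M⁻¹ *ᵥ u) := by
  have hfactor : M + vecMulVec u v = M * (1 + vecMulVec (M⁻¹ *ᵥ u) v) := by
    rw [Matrix.mul_add, Matrix.mul_one, mul_vecMulVec, mulVec_mulVec, mul_nonsing_inv M hM,
      one_mulVec]
  rw [hfactor, det_mul, vecMulVec_eq Unit, det_one_add_replicateCol_mul_replicateRow]

theorem PosDef.two_mul_dotProduct_sub_le_dotProduct_inv_mulVec {S : Matrix n n ℝ}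
    (hS : S.PosDef) (x y : n → ℝ) : 2 * (y ⬝ᵥ x) - y ⬝ᵥ S *ᵥ y ≤ x ⬝ᵥ S⁻¹ *ᵥ x := by
  set w := S⁻¹ *ᵥ x
  have hSw : S *ᵥ w = x := by
    rw [mulVec_mulVec, mul_nonsing_inv S hS.det_pos.ne'.isUnit, one_mulVec]
  have hsq : 0 ≤ (y - w) ⬝ᵥ S *ᵥ (y - w) := by
    simpa using hS.posSemidef.dotProduct_mulVec_nonneg (y - w)
  have hexpand : (y - w) ⬝ᵥ S *ᵥ (y - w) = y ⬝ᵥ S *ᵥ y - 2 * (y ⬝ᵥ x) + x ⬝ᵥ w := by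
    have hsymm : S.IsSymm := isHermitian_iff_isSymm.mp hS.isHermitian
    rw [mulVec_sub, dotProduct_sub, sub_dotProduct, sub_dotProduct, hSw,
      hsymm.dotProduct_mulVec_comm w y, hSw, dotProduct_comm w x]
    ring
  linarith

theorem PosDef.dotProduct_inv_mulVec_le_of_posSemidef_sub {S A : Matrix n n ℝ} (hS : S.PosDef)
    (hAS : (A - S).PosSemidef) (x : n → ℝ) : x ⬝ᵥ A⁻¹ *ᵥ x ≤ x ⬝ᵥ S⁻¹ *ᵥ x := by
  have hA : A.PosDef := by simpa using hS.add_posSemidef hAS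
  set y := A⁻¹ *ᵥ x
  have hAy : A *ᵥ y = x := by
    rw [mulVec_mulVec, mul_nonsing_inv A hA.det_pos.ne'.isUnit, one_mulVec]
  have hSA : y ⬝ᵥ S *ᵥ y ≤ y ⬝ᵥ x := by
    have hquad := hAS.dotProduct_mulVec_nonneg y
    simp only [star_trivial, sub_mulVec, dotProduct_sub, sub_nonneg, hAy] at hquad
    exact hquad
  have hyx : y ⬝ᵥ x = x ⬝ᵥ A⁻¹ *ᵥ x := dotProduct_comm y x
  have := hS.two_mul_dotProduct_sub_le_dotProduct_inv_mulVec x y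
  linarith

end Matrix

theorem stmt_12_general {n : ℕ} (S A : Matrix (Fin n) (Fin n) ℝ)
    (hS : S.PosDef) (hAS : (A - S).PosSemidef)
    (x : Fin n → ℝ) :
    (A + vecMulVec x x).det / (S + vecMulVec x x).det ≤ A.det / S.det := by
  have hA : A.PosDef := by simpa using hS.add_posSemidef hAS
  have hqA : 0 ≤ x ⬝ᵥ A⁻¹ *ᵥ x := by
    simpa using hA.inv.posSemidef.dotProduct_mulVec_nonneg x
  have hq := hS.dotProduct_inv_mulVec_le_of_posSemidef_sub hAS x
  rw [det_add_vecMulVec_s12 hA.det_pos.ne'.isUnit, det_add_vecMulVec_s12 hS.det_pos.ne'.isUnit,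
    mul_div_mul_comm]
  exact mul_le_of_le_one_right (div_nonneg hA.det_pos.le hS.det_pos.le)
    ((div_le_one (by linarith)).mpr (by linarith))

/-- Adding the same rank-one update to the numerator and denominator does not
increase the determinant ratio: if `A - S` is positive semidefinite then
`det (A + xxᵀ) / det (S + xxᵀ) ≤ det A / det S`. -/
theorem stmt_12 {n : ℕ} (S A : Matrix (Fin n) (Fin n) ℝ)
    (hS : S.PosDef) (hA : A.PosDef) (hAS : (A - S).PosSemidef)
    (x : Fin n → ℝ) :
    (A + vecMulVec x x).det / (S + vecMulVec x x).det ≤ A.det / S.det :=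
  stmt_12_general S A hS hAS x
end
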